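/- Let m ≥ n ≥ 1, let p ∈ [1,∞) be a real number, and let τ ≥ 1 be a real number. Let c_1, …, c_n ∈ ℝ^m be linearly independent vectors whose Gram–Schmidt orthogonalization satisfies the LLL reducedness conditions: |μ_{ij}| ≤ 1/2 for all 1 ≤ j < i ≤ n, and ‖c*_i‖₂² ≥ ½‖c*_{i−1}‖₂² for all 1 < i ≤ n. Let t′ ∈ ℝ^m be such that for every i the coefficient ⟨t′, c*_i⟩/⟨c*_i, c*_i⟩ lies in (−1/2, 1/2], and suppose there exists z₀ ∈ ℤ^n with ‖Σ_i (z₀)_i c_i − t′‖_p ≤ τ · ‖c_1‖_p (i.e., the ℓ_p distance of t′ to the lattice is at most τ‖c_1‖_p). If z ∈ ℤ^n is such that ‖Σ_i z_i c_i − t′‖_p ≤ ‖Σ_i y_i c_i − t′‖_p for every y ∈ ℤ^n, then max_i |z_i| < τ · m · 2^{3n/2}. -/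

import Mathlib

open scoped RealInnerProductSpace

/-- The Gram–Schmidt orthogonalization of a family of vectors indexed by `Fin n`
(instances given explicitly to aid elaboration). -/
noncomputable def gso {m n : ℕ} (c : Fin n → EuclideanSpace ℝ (Fin m)) :
    Fin n → EuclideanSpace ℝ (Fin m) :=
  @InnerProductSpace.gramSchmidt ℝ _ _ _ _ (Fin n) Fin.instLinearOrder (Fin.instLocallyFiniteOrderBot n)
    IsWellOrder.toIsWellFounded c

/-- The `ℓ_p` norm `(∑ i, |x i|^p)^{1/p}` of a vector `x ∈ ℝ^m`, for a real `p`. -/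
noncomputable def lpNorm' {m : ℕ} (p : ℝ) (x : EuclideanSpace ℝ (Fin m)) : ℝ :=
  (∑ i, |x i| ^ p) ^ (1 / p)

/-!
Put `x = ∑ zᵢ cᵢ - t'`. Optimality of `z` and the promise give `‖x‖_p ≤ τ ‖c₁‖_p`, and passing
between `ℓ_p` and `ℓ₂` costs at most a factor `m`, so `‖x‖₂ ≤ τ m ‖c₁‖₂`. The condition
`‖c*_i‖² ≥ ½ ‖c*_{i-1}‖²` gives `‖c₁‖ ≤ √2^(n-1) ‖c*_j‖` for every `j`. Reading off the
Gram–Schmidt coefficient of `x` along `c*_j`, where `z_j` appears with coefficient one and the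
later `z_i` with coefficients `μ_ij`, and using `|μ_ij| ≤ 1/2` and the bound on the coefficients
of `t'`, gives the triangular system `|z_j| ≤ B + ½ ∑_{i>j} |z_i|` with `B = τ m √2^(n-1) + ½`.
Solving it from the last index downwards yields `|z_j| ≤ B (3/2)^(n-1-j)`, which is less than
`τ m 2^(3n/2)`.
-/

open Finset InnerProductSpace

theorem Real.sum_rpow_le_rpow_sum {ι : Type*} (s : Finset ι) {f : ι → ℝ} (hf : ∀ i ∈ s, 0 ≤ f i)
    {r : ℝ} (hr : 1 ≤ r) : ∑ i ∈ s, f i ^ r ≤ (∑ i ∈ s, f i) ^ r := by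
  have hS : 0 ≤ ∑ i ∈ s, f i := sum_nonneg hf
  have hr' : 1 + (r - 1) ≠ 0 := by linarith
  calc ∑ i ∈ s, f i ^ r = ∑ i ∈ s, f i * f i ^ (r - 1) := by
        refine sum_congr rfl fun i hi => ?_
        rw [← Real.rpow_one_add' (hf i hi) hr', add_sub_cancel]
    _ ≤ ∑ i ∈ s, f i * (∑ j ∈ s, f j) ^ (r - 1) := by
        refine sum_le_sum fun i hi => mul_le_mul_of_nonneg_left ?_ (hf i hi)
        exact Real.rpow_le_rpow (hf i hi) (single_le_sum hf hi) (by linarith)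
    _ = (∑ i ∈ s, f i) ^ r := by
        rw [← sum_mul, ← Real.rpow_one_add' hS hr', add_sub_cancel]

section LpNorm

variable {m : ℕ} {p q : ℝ}

theorem lpNorm'_nonneg (p : ℝ) (x : EuclideanSpace ℝ (Fin m)) : 0 ≤ lpNorm' p x := by
  unfold lpNorm'; positivity

theorem abs_apply_le_lpNorm' (hp : 0 < p) (x : EuclideanSpace ℝ (Fin m)) (i : Fin m) :
    |x i| ≤ lpNorm' p x := by
  calc |x i| = (|x i| ^ p) ^ (1 / p) := by
        rw [one_div, Real.rpow_rpow_inv (abs_nonneg _) hp.ne']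
    _ ≤ lpNorm' p x := by
        refine Real.rpow_le_rpow (by positivity) ?_ (by positivity)
        exact single_le_sum (fun j _ => Real.rpow_nonneg (abs_nonneg (x j)) p) (mem_univ i)

theorem lpNorm'_le_rpow_mul_lpNorm' (hp : 0 < p) (hq : 0 < q) (x : EuclideanSpace ℝ (Fin m)) :
    lpNorm' q x ≤ (m : ℝ) ^ (1 / q) * lpNorm' p x := by
  have hL := lpNorm'_nonneg p x
  calc lpNorm' q x ≤ (∑ _i : Fin m, lpNorm' p x ^ q) ^ (1 / q) := by
        refine Real.rpow_le_rpow (by positivity) (sum_le_sum fun i _ => ?_) (by positivity)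
        exact Real.rpow_le_rpow (abs_nonneg _) (abs_apply_le_lpNorm' hp x i) hq.le
    _ = (m : ℝ) ^ (1 / q) * lpNorm' p x := by
        rw [sum_const, card_univ, Fintype.card_fin, nsmul_eq_mul,
          Real.mul_rpow (Nat.cast_nonneg m) (Real.rpow_nonneg hL q), one_div,
          Real.rpow_rpow_inv hL hq.ne']

theorem lpNorm'_le_lpNorm'_of_le (hp : 0 < p) (hpq : p ≤ q) (x : EuclideanSpace ℝ (Fin m)) :
    lpNorm' q x ≤ lpNorm' p x := by
  have hq : 0 < q := hp.trans_le hpq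
  have hS : 0 ≤ ∑ i, |x i| ^ p := by positivity
  have hsum : ∑ i, |x i| ^ q ≤ (∑ i, |x i| ^ p) ^ (q / p) := by
    calc ∑ i, |x i| ^ q = ∑ i, (|x i| ^ p) ^ (q / p) := by
          refine sum_congr rfl fun i _ => ?_
          rw [← Real.rpow_mul (abs_nonneg _), mul_div_cancel₀ q hp.ne']
      _ ≤ (∑ i, |x i| ^ p) ^ (q / p) :=
          Real.sum_rpow_le_rpow_sum _ (fun i _ => Real.rpow_nonneg (abs_nonneg _) p)
            ((one_le_div hp).mpr hpq)
  calc lpNorm' q x ≤ ((∑ i, |x i| ^ p) ^ (q / p)) ^ (1 / q) :=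
        Real.rpow_le_rpow (by positivity) hsum (by positivity)
    _ = lpNorm' p x := by
        rw [lpNorm', ← Real.rpow_mul hS]
        congr 1
        field_simp

theorem norm_eq_lpNorm'_two (x : EuclideanSpace ℝ (Fin m)) : ‖x‖ = lpNorm' 2 x := by
  rw [EuclideanSpace.norm_eq, lpNorm', Real.sqrt_eq_rpow]
  simp

theorem norm_le_mul_norm_of_lpNorm'_le (hp : 1 ≤ p) (hm : 1 ≤ m) {τ : ℝ} (hτ : 0 ≤ τ)
    {x y : EuclideanSpace ℝ (Fin m)} (h : lpNorm' p x ≤ τ * lpNorm' p y) :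
    ‖x‖ ≤ τ * m * ‖y‖ := by
  have hp0 : 0 < p := one_pos.trans_le hp
  have hm' : (1 : ℝ) ≤ m := by exact_mod_cast hm
  rw [norm_eq_lpNorm'_two x, norm_eq_lpNorm'_two y]
  rcases le_total p 2 with hp2 | hp2
  · have hmp : (m : ℝ) ^ (1 / p) ≤ m :=
      Real.rpow_le_self_of_one_le hm' ((div_le_one hp0).mpr hp)
    calc lpNorm' 2 x ≤ lpNorm' p x := lpNorm'_le_lpNorm'_of_le hp0 hp2 x
      _ ≤ τ * lpNorm' p y := h
      _ ≤ τ * ((m : ℝ) ^ (1 / p) * lpNorm' 2 y) :=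
          mul_le_mul_of_nonneg_left (lpNorm'_le_rpow_mul_lpNorm' two_pos hp0 y) hτ
      _ ≤ τ * m * lpNorm' 2 y := by
          rw [← mul_assoc]
          gcongr
          exact lpNorm'_nonneg 2 y
  · have hm2 : (m : ℝ) ^ (1 / (2 : ℝ)) ≤ m := Real.rpow_le_self_of_one_le hm' (by norm_num)
    calc lpNorm' 2 x ≤ (m : ℝ) ^ (1 / (2 : ℝ)) * lpNorm' p x :=
          lpNorm'_le_rpow_mul_lpNorm' hp0 two_pos x
      _ ≤ (m : ℝ) ^ (1 / (2 : ℝ)) * (τ * lpNorm' 2 y) := by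
          gcongr
          exact h.trans (mul_le_mul_of_nonneg_left (lpNorm'_le_lpNorm'_of_le two_pos hp2 y) hτ)
      _ ≤ τ * m * lpNorm' 2 y := by
          rw [mul_left_comm, ← mul_assoc]
          have := lpNorm'_nonneg 2 y
          gcongr

end LpNorm

section GramSchmidt

variable {m n : ℕ} (c : Fin n → EuclideanSpace ℝ (Fin m))

theorem gso_eq_gramSchmidt : gso c = gramSchmidt ℝ c := rfl

theorem gso_zero (hn : 1 ≤ n) : gso c ⟨0, hn⟩ = c ⟨0, hn⟩ := by
  have : Iio (⟨0, hn⟩ : Fin n) = ∅ := by ext i; simp [Fin.lt_def]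
  rw [gso_eq_gramSchmidt, gramSchmidt_def, this, sum_empty, sub_zero]

theorem inner_gso_eq_zero_of_lt {i j : Fin n} (h : i < j) : ⟪c i, gso c j⟫ = 0 := by
  rw [real_inner_comm]; exact gramSchmidt_inv_triangular ℝ c h

theorem inner_gso_self (j : Fin n) : ⟪c j, gso c j⟫ = ‖gso c j‖ ^ 2 := by
  conv_lhs => rw [gramSchmidt_def'' ℝ c j]
  rw [gso_eq_gramSchmidt, inner_add_left, sum_inner, real_inner_self_eq_norm_sq,
    add_eq_left]
  refine sum_eq_zero fun k hk => ?_
  rw [real_inner_smul_left, gramSchmidt_orthogonal ℝ c (mem_Iio.mp hk).ne, mul_zero]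


theorem inner_sum_smul_gso (a : Fin n → ℝ) (j : Fin n) :
    ⟪∑ i, a i • c i, gso c j⟫ = a j * ‖gso c j‖ ^ 2 + ∑ i ∈ Ioi j, a i * ⟪c i, gso c j⟫ := by
  have hlow : ∀ i ∈ univ, i ∉ Ici j → a i * ⟪c i, gso c j⟫ = 0 := fun i _ hi => by
    rw [inner_gso_eq_zero_of_lt c (not_le.mp (mt mem_Ici.mpr hi)), mul_zero]
  simp_rw [sum_inner, real_inner_smul_left]
  rw [← sum_subset (subset_univ _) hlow, ← Ioi_insert, sum_insert notMem_Ioi_self,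
    inner_gso_self]

theorem norm_gso_le_sqrt_two_pow_mul (hn : 1 ≤ n)
    (hred : ∀ i j : Fin n, (j : ℕ) + 1 = (i : ℕ) → ‖gso c i‖ ^ 2 ≥ 1 / 2 * ‖gso c j‖ ^ 2)
    (j : Fin n) : ‖gso c ⟨0, hn⟩‖ ≤ √2 ^ (j : ℕ) * ‖gso c j‖ := by
  obtain ⟨k, hk⟩ := j
  induction k with
  | zero => simp
  | succ k ih =>
    have hstep : ‖gso c ⟨k, by omega⟩‖ ≤ √2 * ‖gso c ⟨k + 1, hk⟩‖ := by
      refine (pow_le_pow_iff_left₀ (norm_nonneg _) (by positivity) two_ne_zero).mp ?_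
      have := hred ⟨k + 1, hk⟩ ⟨k, by omega⟩ rfl
      rw [mul_pow, Real.sq_sqrt zero_le_two]
      linarith
    calc ‖gso c ⟨0, hn⟩‖ ≤ √2 ^ k * ‖gso c ⟨k, by omega⟩‖ := ih (by omega)
      _ ≤ √2 ^ k * (√2 * ‖gso c ⟨k + 1, hk⟩‖) := by gcongr
      _ = √2 ^ (k + 1) * ‖gso c ⟨k + 1, hk⟩‖ := by ring

theorem norm_le_sqrt_two_pow_mul_norm_gso (hn : 1 ≤ n)
    (hred : ∀ i j : Fin n, (j : ℕ) + 1 = (i : ℕ) → ‖gso c i‖ ^ 2 ≥ 1 / 2 * ‖gso c j‖ ^ 2)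
    (j : Fin n) : ‖c ⟨0, hn⟩‖ ≤ √2 ^ (n - 1) * ‖gso c j‖ := by
  rw [← gso_zero c hn]
  refine (norm_gso_le_sqrt_two_pow_mul c hn hred j).trans ?_
  gcongr
  · exact Real.one_le_sqrt.mpr one_le_two
  · omega

theorem abs_le_of_gramSchmidt_coeffs_le {j : Fin n} (hg : gso c j ≠ 0)
    (hμ : ∀ i, j < i → |⟪c i, gso c j⟫ / ⟪gso c j, gso c j⟫| ≤ 1 / 2)
    {t : EuclideanSpace ℝ (Fin m)} (ht : |⟪t, gso c j⟫ / ⟪gso c j, gso c j⟫| ≤ 1 / 2)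
    (a : Fin n → ℝ) :
    |a j| ≤ ‖∑ i, a i • c i - t‖ / ‖gso c j‖ + 1 / 2 + 1 / 2 * ∑ i ∈ Ioi j, |a i| := by
  set g := gso c j
  set x := ∑ i, a i • c i - t
  have hg2 : ⟪g, g⟫ = ‖g‖ ^ 2 := real_inner_self_eq_norm_sq g
  have hgpos : 0 < ‖g‖ := norm_pos_iff.mpr hg
  have hdecomp : a j = ⟪x, g⟫ / ⟪g, g⟫ + ⟪t, g⟫ / ⟪g, g⟫
      - ∑ i ∈ Ioi j, a i * (⟪c i, g⟫ / ⟪g, g⟫) := by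
    rw [inner_sub_left, inner_sum_smul_gso, hg2]
    simp_rw [← mul_div_assoc, ← sum_div]
    field_simp
    ring
  have hx : |⟪x, g⟫ / ⟪g, g⟫| ≤ ‖x‖ / ‖g‖ := by
    rw [abs_div, hg2, abs_of_nonneg (sq_nonneg ‖g‖), div_le_div_iff₀ (by positivity) hgpos]
    nlinarith [abs_real_inner_le_norm x g]
  have hsum : |∑ i ∈ Ioi j, a i * (⟪c i, g⟫ / ⟪g, g⟫)| ≤ 1 / 2 * ∑ i ∈ Ioi j, |a i| := by
    rw [mul_sum]
    refine (abs_sum_le_sum_abs _ _).trans (sum_le_sum fun i hi => ?_)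
    rw [abs_mul, mul_comm]
    exact mul_le_mul_of_nonneg_right (hμ i (mem_Ioi.mp hi)) (abs_nonneg _)
  calc |a j| ≤ |⟪x, g⟫ / ⟪g, g⟫| + |⟪t, g⟫ / ⟪g, g⟫|
        + |∑ i ∈ Ioi j, a i * (⟪c i, g⟫ / ⟪g, g⟫)| := by
        rw [hdecomp]
        exact (abs_sub _ _).trans (by gcongr; exact abs_add_le _ _)
    _ ≤ ‖x‖ / ‖g‖ + 1 / 2 + 1 / 2 * ∑ i ∈ Ioi j, |a i| := by gcongr

end GramSchmidt

theorem le_mul_three_halves_pow_of_le_add_half_sum {n : ℕ} {a : Fin n → ℝ} {B : ℝ}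
    (h : ∀ j, a j ≤ B + 1 / 2 * ∑ i ∈ Ioi j, a i) (j : Fin n) :
    a j ≤ B * (3 / 2) ^ (n - 1 - j) := by
  -- The tail sums satisfy `S_j ≤ B + (3/2) S_{j+1}`, so `S_j + 2B` grows by at most `3/2` per step.
  have htail : ∀ d, ∀ j : Fin n, n - 1 - j = d →
      ∑ i ∈ Ioi j, a i ≤ 2 * B * ((3 / 2) ^ d - 1) := by
    intro d
    induction d with
    | zero =>
      intro j hj
      have : Ioi j = ∅ := by
        ext i; have := i.isLt; simp only [mem_Ioi, Fin.lt_def, notMem_empty, iff_false]; omega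
      simp [this]
    | succ d ih =>
      intro j hj
      set k : Fin n := ⟨j + 1, by omega⟩
      have hIoi : Ioi j = insert k (Ioi k) := by
        ext i; simp only [mem_Ioi, mem_insert, Fin.lt_def, Fin.ext_iff, k]; omega
      rw [hIoi, sum_insert notMem_Ioi_self]
      linear_combination h k + 3 / 2 * ih k (by simp only [k]; omega)
  linear_combination h j + 1 / 2 * htail _ j rfl

theorem mul_sqrt_two_pow_add_half_mul_three_halves_pow_lt {K : ℝ} (hK : 1 ≤ K) {n d : ℕ}
    (hd : d < n) : (K * √2 ^ (n - 1) + 1 / 2) * (3 / 2) ^ d < K * 2 ^ (3 * (n : ℝ) / 2) := by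
  obtain ⟨k, rfl⟩ : ∃ k, n = k + 1 := ⟨n - 1, by omega⟩
  have hs1 : 1 < √2 := by rw [Real.lt_sqrt zero_le_one]; norm_num
  have hs2 : √2 ^ 2 = 2 := Real.sq_sqrt zero_le_two
  have hrpow : (2 : ℝ) ^ (3 * ((k + 1 : ℕ) : ℝ) / 2) = √2 ^ (3 * (k + 1)) := by
    rw [Real.sqrt_eq_rpow, ← Real.rpow_natCast, ← Real.rpow_mul zero_le_two]
    push_cast
    ring_nf
  have hKs : 1 ≤ K * √2 ^ k := one_le_mul_of_one_le_of_one_le hK (one_le_pow₀ hs1.le)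
  rw [hrpow, Nat.add_sub_cancel]
  calc (K * √2 ^ k + 1 / 2) * (3 / 2) ^ d ≤ (3 / 2 * (K * √2 ^ k)) * (3 / 2) ^ k := by
        gcongr
        · linarith
        · norm_num
        · omega
    _ = K * √2 ^ k * (3 / 2) ^ (k + 1) := by ring
    _ ≤ K * √2 ^ k * 2 ^ (k + 1) := by gcongr; norm_num
    _ < K * √2 ^ k * 2 ^ (k + 1) * √2 := lt_mul_of_one_lt_right (by positivity) hs1
    _ = K * √2 ^ (3 * (k + 1)) := by
        rw [show (2 : ℝ) ^ (k + 1) = √2 ^ (2 * (k + 1)) by rw [pow_mul, hs2]]; ring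

/-- Let `p ∈ [1,∞)`, `τ ≥ 1`, and let `c_1, …, c_n ∈ ℝ^m` be linearly independent
with LLL-reduced Gram–Schmidt data. Let `t'` have all Gram–Schmidt coefficients in
`(−1/2, 1/2]`, and suppose some lattice vector is within `ℓ_p` distance `τ·‖c_1‖_p` of `t'`.
Then the coefficient vector `z ∈ ℤⁿ` of any `ℓ_p`-closest lattice point to `t'` satisfies
`max_i |z_i| < τ · m · 2^{3n/2}`. -/
theorem stmt_7 (m n : ℕ) (hn : 1 ≤ n) (hmn : n ≤ m)
    (p : ℝ) (hp : 1 ≤ p) (τ : ℝ) (hτ : 1 ≤ τ)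
    (c : Fin n → EuclideanSpace ℝ (Fin m)) (hc : LinearIndependent ℝ c)
    (hμ : ∀ i j : Fin n, j < i →
      abs (⟪c i, gso c j⟫ / ⟪gso c j, gso c j⟫) ≤ 1 / 2)
    (hred : ∀ i j : Fin n, (j : ℕ) + 1 = (i : ℕ) →
      ‖gso c i‖ ^ 2 ≥ (1 / 2) * ‖gso c j‖ ^ 2)
    (t' : EuclideanSpace ℝ (Fin m))
    (ht' : ∀ i : Fin n,
      ⟪t', gso c i⟫ / ⟪gso c i, gso c i⟫ ∈ Set.Ioc (-(1/2) : ℝ) (1/2))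
    (hpromise : ∃ z₀ : Fin n → ℤ,
      lpNorm' p ((∑ i, ((z₀ i : ℝ)) • c i) - t') ≤ τ * lpNorm' p (c ⟨0, hn⟩))
    (z : Fin n → ℤ)
    (hz : ∀ y : Fin n → ℤ,
      lpNorm' p ((∑ i, (z i : ℝ) • c i) - t') ≤ lpNorm' p ((∑ i, (y i : ℝ) • c i) - t')) :
    ∀ i, (|z i| : ℝ) < τ * m * 2 ^ ((3 * (n : ℝ)) / 2) := by
  obtain ⟨z₀, hz₀⟩ := hpromise
  set x := ∑ i, (z i : ℝ) • c i - t'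
  have hm : 1 ≤ m := hn.trans hmn
  have hK : 1 ≤ τ * m := one_le_mul_of_one_le_of_one_le hτ (by exact_mod_cast hm)
  have hx : ‖x‖ ≤ τ * m * ‖c ⟨0, hn⟩‖ :=
    norm_le_mul_norm_of_lpNorm'_le hp hm (by linarith) ((hz z₀).trans hz₀)
  have hcoeff : ∀ j, |(z j : ℝ)| ≤
      (τ * m * √2 ^ (n - 1) + 1 / 2) + 1 / 2 * ∑ i ∈ Ioi j, |(z i : ℝ)| := by
    intro j
    have hg : 0 < ‖gso c j‖ := norm_pos_iff.mpr (gramSchmidt_ne_zero j hc)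
    have hxg : ‖x‖ / ‖gso c j‖ ≤ τ * m * √2 ^ (n - 1) := by
      rw [div_le_iff₀ hg]
      calc ‖x‖ ≤ τ * m * (√2 ^ (n - 1) * ‖gso c j‖) := by
            grw [hx, norm_le_sqrt_two_pow_mul_norm_gso c hn hred j]
        _ = τ * m * √2 ^ (n - 1) * ‖gso c j‖ := by ring
    have := abs_le_of_gramSchmidt_coeffs_le c (gramSchmidt_ne_zero j hc) (fun i => hμ i j)
      (abs_le.mpr ⟨(ht' j).1.le, (ht' j).2⟩) (fun i => (z i : ℝ))
    linarith
  intro i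
  exact (le_mul_three_halves_pow_of_le_add_half_sum hcoeff i).trans_lt
    (mul_sqrt_two_pow_add_half_mul_three_halves_pow_lt hK (by omega))
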